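/- The exact difference when replacing a single 1,1 by 2 at the j-th replacement position in a mixed sequence: with δ_j = μ_1,2,μ_2,2,...,μ_j and ε_j = μ_{j+1},1,1,μ_{j+2},1,1,...,μ_k, one has N[μ_1,2,μ_2,2,...,μ_k,2] − N[μ_1,1,1,μ_2,1,1,...,μ_k] = N[μ_1,2,μ_2,2,...,μ_k,1] − Σ_{j=1}^{k-1} N[δ_j^-]·N[^-ε_j], where δ_j^- removes the last entry of δ_j and ^-ε_j removes the first entry of ε_j. -/

import Mathlib

/-!
Splitting a continuant at a cut, `N[l, m] = N[l]·N[m] + N[l⁻]·N[⁻m]`, shows that replacing one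
separator `1, 1` by `2` lowers `N` by exactly `N[l⁻]·N[⁻m]`, where `l` and `m` are the parts
before and after it. Replacing the separators one at a time from the left telescopes to the
sum; merging `μ₁, 2, μ₂` into a single block makes this an induction on the number of blocks.
Finally `N[δ, 2] = N[δ, 1] + N[δ]`.
-/

/-- head-recursion continuant -/
def contAux : List ℕ → ℕ
  | [] => 1
  | [a] => a
  | a :: b :: l => a * contAux (b :: l) + contAux l

/-- continuant `N[a₁,...,aₙ]`, satisfying `N[] = 1`, `N[a] = a`,
`N[a₁,...,aₙ] = aₙ·N[a₁,...,aₙ₋₁] + N[a₁,...,aₙ₋₂]`. -/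
def contN (l : List ℕ) : ℕ := contAux l.reverse


/-- μ is either a nonempty sequence of positive integers or the sequence 0,0 -/
def OkSeq (μ : List ℕ) : Prop := (μ ≠ [] ∧ ∀ x ∈ μ, 0 < x) ∨ μ = [0, 0]

theorem contAux_append : ∀ x y : List ℕ, x ≠ [] → y ≠ [] →
    contAux (x ++ y) = contAux x * contAux y + contAux x.dropLast * contAux y.tail
  | [_], _ :: [], _, _ | [_], _ :: _ :: _, _, _ => by simp [contAux]
  | [_, _], _ :: [], _, _ | [_, _], _ :: _ :: _, _, _ => by simp [contAux]; ring
  | a :: b :: c :: x, y, _, hy => by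
    have ih₁ := contAux_append (b :: c :: x) y (List.cons_ne_nil _ _) hy
    have ih₂ := contAux_append (c :: x) y (List.cons_ne_nil _ _) hy
    simp only [List.cons_append, List.dropLast_cons_cons] at ih₁ ih₂ ⊢
    rw [contAux.eq_3, ih₁, ih₂, contAux.eq_3 a b, contAux.eq_3 a b]
    ring

theorem contN_append {l m : List ℕ} (hl : l ≠ []) (hm : m ≠ []) :
    contN (l ++ m) = contN l * contN m + contN l.dropLast * contN m.tail := by
  simp only [contN, List.reverse_append]
  rw [contAux_append _ _ (by simpa) (by simpa), List.dropLast_reverse, List.tail_reverse]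
  ring

theorem contN_append_singleton {l : List ℕ} (hl : l ≠ []) (a : ℕ) :
    contN (l ++ [a]) = a * contN l + contN l.dropLast := by
  rw [contN_append hl (List.cons_ne_nil _ _)]
  simp [contN, contAux, mul_comm]

theorem contN_append_two (l : List ℕ) : contN (l ++ [2]) = contN (l ++ [1]) + contN l := by
  rcases eq_or_ne l [] with rfl | hl
  · rfl
  · rw [contN_append_singleton hl, contN_append_singleton hl]
    ring

theorem contN_append_one_one_append {l m : List ℕ} (hl : l ≠ []) (hm : m ≠ []) :
    contN (l ++ [1, 1] ++ m) = contN (l ++ [2] ++ m) + contN l.dropLast * contN m.tail := by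
  rw [contN_append (by simp) hm, contN_append (by simp) hm,
    show l ++ [1, 1] = l ++ [1] ++ [1] by simp, contN_append_singleton (by simp), List.dropLast_concat,
    List.dropLast_concat, List.dropLast_concat, contN_append_two, contN_append_singleton hl]
  ring

theorem flatten_intersperse_append_cons {α : Type*} (s a b : List α) (ρ : List (List α)) :
    (List.intersperse s ((a ++ b) :: ρ)).flatten = a ++ (List.intersperse s (b :: ρ)).flatten := by
  cases ρ <;> simp [List.intersperse_cons_cons]

theorem OkSeq.ne_nil {μ : List ℕ} (h : OkSeq μ) : μ ≠ [] := by
  rcases h with ⟨h, _⟩ | rfl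
  · exact h
  · simp

theorem contN_flatten_intersperse_two_add_sum : ∀ μs : List (List ℕ), (∀ μ ∈ μs, μ ≠ []) →
    contN (List.intersperse [2] μs).flatten +
      ∑ j ∈ Finset.Ico 1 μs.length,
        contN ((List.intersperse [2] (μs.take j)).flatten).dropLast *
          contN ((List.intersperse [1, 1] (μs.drop j)).flatten).tail =
    contN (List.intersperse [1, 1] μs).flatten
  | [], _ | [_], _ => by simp
  | μ :: ν :: ρ, hne => by
    have hμ : μ ≠ [] := hne μ (by simp)
    have hν : ν ≠ [] := hne ν (by simp)
    have ih := contN_flatten_intersperse_two_add_sum ((μ ++ [2] ++ ν) :: ρ) (by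
      simp only [List.mem_cons, forall_eq_or_imp] at hne ⊢
      exact ⟨by simp [hμ], hne.2.2⟩)
    have hF : (List.intersperse [1, 1] (ν :: ρ)).flatten ≠ [] := by
      cases ρ <;> simp [List.intersperse_cons_cons, hν]
    have merge_two : ∀ σ, (List.intersperse [2] (μ :: ν :: σ)).flatten =
        (List.intersperse [2] ((μ ++ [2] ++ ν) :: σ)).flatten := fun σ => by
      rw [flatten_intersperse_append_cons, List.intersperse_cons_cons]
      simp
    have split_one_one : (List.intersperse [1, 1] (μ :: ν :: ρ)).flatten =
        μ ++ [1, 1] ++ (List.intersperse [1, 1] (ν :: ρ)).flatten := by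
      simp [List.intersperse_cons_cons]
    rw [Finset.sum_Ico_eq_sum_range] at ih ⊢
    simp only [List.length_cons, Nat.add_sub_cancel, Finset.sum_range_succ'] at ih ⊢
    rw [split_one_one, contN_append_one_one_append hμ hF, ← flatten_intersperse_append_cons, ← ih]
    simp only [Nat.add_comm 1, List.take_succ_cons, List.drop_succ_cons, merge_two]
    simp [add_assoc]
termination_by μs => μs.length

theorem stmt_15_general (μs : List (List ℕ))
    (hok : ∀ μ ∈ μs, OkSeq μ) :
    contN ((List.intersperse [2] μs).flatten ++ [2]) +
      ∑ j ∈ Finset.Ico 1 μs.length,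
        contN ((List.intersperse [2] (μs.take j)).flatten).dropLast *
          contN ((List.intersperse [1, 1] (μs.drop j)).flatten).tail =
    contN ((List.intersperse [2] μs).flatten ++ [1]) +
      contN (List.intersperse [1, 1] μs).flatten := by
  rw [contN_append_two, ← contN_flatten_intersperse_two_add_sum μs fun μ hμ => (hok μ hμ).ne_nil]
  ring

theorem stmt_15 (μs : List (List ℕ)) (hk : 2 ≤ μs.length)
    (hok : ∀ μ ∈ μs, OkSeq μ) :
    contN ((List.intersperse [2] μs).flatten ++ [2]) +
      ∑ j ∈ Finset.Ico 1 μs.length,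
        contN ((List.intersperse [2] (μs.take j)).flatten).dropLast *
          contN ((List.intersperse [1, 1] (μs.drop j)).flatten).tail =
    contN ((List.intersperse [2] μs).flatten ++ [1]) +
      contN (List.intersperse [1, 1] μs).flatten :=
  stmt_15_general μs hok
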